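/- Let m ≥ 1, let Σ be an m×m real symmetric positive definite matrix with symmetric positive definite square root Σ^{1/2}, let t_1,…,t_m be real numbers, set t_{m+1} := 0 and c_i := t_i − t_{i+1}, and define ψ : M_m(ℝ) → ℂ by ψ(T) := ∏_{i=1}^m det(E_iᵀ(I_m − i·Σ^{1/2} T Σ^{1/2})E_i)^{c_i}, using principal-branch complex powers. Let T be an m×m real matrix such that det(E_iᵀ(I_m − i·Σ^{1/2} T Σ^{1/2})E_i) does not lie in (−∞,0] for each i = 1,…,m. Then ψ is twice Fréchet differentiable (over ℝ) at T, and D²ψ(T)(H, K) = i²·[ (∑_{i=1}^m c_i tr(A_i H))·(∑_{j=1}^m c_j tr(A_j K)) − ∑_{i=1}^m c_i tr(A_i H A_i K) ]·ψ(T) for all H, K ∈ M_m(ℝ), where A_i := Σ^{1/2} E_i (E_iᵀ(I_m − i·Σ^{1/2} T Σ^{1/2})E_i)^{−1} E_iᵀ Σ^{1/2}. -/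

import Mathlib

open MeasureTheory Matrix Finset

noncomputable section

/-- Measurable space structure on real matrices (the product σ-algebra). -/
instance matrixMeasurableSpace (m n : ℕ) : MeasurableSpace (Matrix (Fin m) (Fin n) ℝ) :=
  MeasurableSpace.pi

attribute [local instance] Matrix.normedAddCommGroup Matrix.normedSpace

/-- `nth κ j` is `κ j` when `j < m` and `0` otherwise. -/
def nth {m : ℕ} (κ : Fin m → ℕ) (j : ℕ) : ℕ := if h : j < m then κ ⟨j, h⟩ else 0

/-- Determinant of the `k × k` leading principal submatrix (for `k ≤ m`). -/
def lpm {R : Type*} [CommRing R] {m : ℕ} (A : Matrix (Fin m) (Fin m) R) (k : ℕ) : R :=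
  (Matrix.of fun r s : Fin (min k m) =>
    A (Fin.castLE (min_le_right k m) r) (Fin.castLE (min_le_right k m) s)).det

/-- The generalized power (highest weight vector)
`q_κ(A) = det(A)^{k_m} ∏_{i=1}^{m-1} det(A_i)^{k_i - k_{i+1}}`. -/
def gpow {R : Type*} [CommRing R] {m : ℕ} (κ : Fin m → ℕ) (A : Matrix (Fin m) (Fin m) R) : R :=
  ∏ i : Fin m, lpm A ((i : ℕ) + 1) ^ (nth κ (i : ℕ) - nth κ ((i : ℕ) + 1))

/-- Lebesgue measure on symmetric matrices: the pushforward of Lebesgue measure on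
`ℝ^{m(m+1)/2}` under the coordinates `(x_{ij})_{i ≤ j}`. -/
def symVolume (m : ℕ) : Measure (Matrix (Fin m) (Fin m) ℝ) :=
  Measure.map (fun x : ({p : Fin m × Fin m // p.1 ≤ p.2} → ℝ) =>
    Matrix.of fun i j => if h : i ≤ j then x ⟨(i, j), h⟩ else x ⟨(j, i), le_of_not_ge h⟩)
    volume

/-- The open cone of symmetric positive definite real matrices. -/
def PDcone (m : ℕ) : Set (Matrix (Fin m) (Fin m) ℝ) := {X | X.PosDef}

/-- The `m × k` matrix formed by the first `k` columns of the identity matrix. -/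
def Emat (R : Type*) [Zero R] [One R] (m k : ℕ) : Matrix (Fin m) (Fin k) R :=
  Matrix.of fun r c => if (r : ℕ) = (c : ℕ) then 1 else 0

/-- The generalized gamma function of weight `κ`:
`Γ_m[a, κ] = π^{m(m-1)/4} ∏_{i=1}^m Γ(a + k_i - (i-1)/2)`. -/
def GammaI (m : ℕ) (κ : Fin m → ℕ) (a : ℝ) : ℝ :=
  Real.pi ^ (((m * (m - 1) : ℕ) : ℝ) / 4) *
    ∏ i : Fin m, Real.Gamma (a + κ i - (i : ℝ) / 2)

/-- Kotz's generalized gamma function of weight `-κ`: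
`Γ_m[a, -κ] = π^{m(m-1)/4} ∏_{i=1}^m Γ(a - k_i - (m-i)/2)`. -/
def GammaII (m : ℕ) (κ : Fin m → ℕ) (a : ℝ) : ℝ :=
  Real.pi ^ (((m * (m - 1) : ℕ) : ℝ) / 4) *
    ∏ i : Fin m, Real.Gamma (a - κ i - ((m : ℝ) - 1 - (i : ℝ)) / 2)

/-- The Riesz type I density with parameters `(a, κ, Σ)`. -/
def densityI {m : ℕ} (κ : Fin m → ℕ) (Sig : Matrix (Fin m) (Fin m) ℝ) (a : ℝ)
    (X : Matrix (Fin m) (Fin m) ℝ) : ℝ :=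
  Real.exp (-((Sig⁻¹ * X).trace)) * X.det ^ (a - ((m : ℝ) + 1) / 2) * gpow κ X /
    (GammaI m κ a * Sig.det ^ a * gpow κ Sig)

/-- The Riesz type II density with parameters `(a, κ, Σ)`. -/
def densityII {m : ℕ} (κ : Fin m → ℕ) (Sig : Matrix (Fin m) (Fin m) ℝ) (a : ℝ)
    (X : Matrix (Fin m) (Fin m) ℝ) : ℝ :=
  Real.exp (-((Sig⁻¹ * X).trace)) * X.det ^ (a - ((m : ℝ) + 1) / 2) * gpow κ X⁻¹ /
    (GammaII m κ a * Sig.det ^ a * gpow κ Sig⁻¹)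

/-- Entrywise coercion of a real matrix to a complex matrix. -/
def cmat {m : ℕ} (A : Matrix (Fin m) (Fin m) ℝ) : Matrix (Fin m) (Fin m) ℂ :=
  A.map Complex.ofReal

/-- `nthR t j` is `t j` when `j < m` and `0` otherwise. -/
def nthR {m : ℕ} (t : Fin m → ℝ) (j : ℕ) : ℝ := if h : j < m then t ⟨j, h⟩ else 0

/-- The `k × k` leading principal submatrix `E_kᵀ M E_k` of a complex matrix. -/
def lpsub {m : ℕ} (M : Matrix (Fin m) (Fin m) ℂ) (k : ℕ) : Matrix (Fin k) (Fin k) ℂ :=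
  (Emat ℂ m k)ᵀ * M * Emat ℂ m k

/-- The complex matrix `I_m - i · Σ^{1/2} T Σ^{1/2}`. -/
def Rmat {m : ℕ} (Shalf T : Matrix (Fin m) (Fin m) ℝ) : Matrix (Fin m) (Fin m) ℂ :=
  1 - Complex.I • (cmat Shalf * cmat T * cmat Shalf)

/-- `A_i = Σ^{1/2} E_i (E_iᵀ (I_m - i Σ^{1/2} T Σ^{1/2}) E_i)⁻¹ E_iᵀ Σ^{1/2}`. -/
def Amat {m : ℕ} (Shalf T : Matrix (Fin m) (Fin m) ℝ) (i : Fin m) :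
    Matrix (Fin m) (Fin m) ℂ :=
  cmat Shalf * Emat ℂ m ((i : ℕ) + 1) * (lpsub (Rmat Shalf T) ((i : ℕ) + 1))⁻¹ *
    (Emat ℂ m ((i : ℕ) + 1))ᵀ * cmat Shalf

/-- The characteristic function of the Riesz type I distribution,
`φ(T) = ∏_i det(E_iᵀ (I - i Σ^{1/2} T Σ^{1/2}) E_i)^{-(t_i - t_{i+1})}`. -/
def phiI {m : ℕ} (Shalf : Matrix (Fin m) (Fin m) ℝ) (t : Fin m → ℝ)
    (T : Matrix (Fin m) (Fin m) ℝ) : ℂ :=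
  ∏ i : Fin m,
    (lpsub (Rmat Shalf T) ((i : ℕ) + 1)).det ^ ((-(t i - nthR t ((i : ℕ) + 1)) : ℝ) : ℂ)

/-- The characteristic function of the Riesz type II distribution,
`ψ(T) = ∏_i det(E_iᵀ (I - i Σ^{1/2} T Σ^{1/2}) E_i)^{(t_i - t_{i+1})}`. -/
def psiII {m : ℕ} (Shalf : Matrix (Fin m) (Fin m) ℝ) (t : Fin m → ℝ)
    (T : Matrix (Fin m) (Fin m) ℝ) : ℂ :=
  ∏ i : Fin m,
    (lpsub (Rmat Shalf T) ((i : ℕ) + 1)).det ^ (((t i - nthR t ((i : ℕ) + 1)) : ℝ) : ℂ)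

/-!
`ψ` is a product of complex powers of the leading principal minors `det N_i(T)` of the affine
matrix function `N_i(T) = E_iᵀ (I - i Σ^{1/2} T Σ^{1/2}) E_i`. Jacobi's formula
`d(det N) = det N · tr(N⁻¹ dN)` gives `Dψ(T) H = ψ(T) · tr(B(T) H)` with the logarithmic gradient
`B = -i ∑ c_i A_i`. Differentiating `T ↦ ψ(T) • B(T)` once more, `d(N⁻¹) = -N⁻¹ dN N⁻¹` yields
`dA_i(H) = i A_i H A_i`, and the product rule produces the formula.
-/

namespace Matrix

variable {𝕜 : Type*} [NontriviallyNormedField 𝕜] {n : Type*} [Fintype n]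

section MulLeftRight

variable [CompleteSpace 𝕜] {l m o : Type*} [Fintype m]

def mulLeftRightCLM (P : Matrix l m 𝕜) (Q : Matrix n o 𝕜) : Matrix m n 𝕜 →L[𝕜] Matrix l o 𝕜 :=
  LinearMap.toContinuousLinearMap ((mulRightLinearMap l 𝕜 Q).comp (mulLeftLinearMap n 𝕜 P))

@[simp]
theorem mulLeftRightCLM_apply (P : Matrix l m 𝕜) (Q : Matrix n o 𝕜) (X : Matrix m n 𝕜) :
    mulLeftRightCLM P Q X = P * X * Q := rfl

end MulLeftRight

variable [DecidableEq n]

theorem differentiable_det : Differentiable 𝕜 (det : Matrix n n 𝕜 → 𝕜) := by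
  have hdet : (det : Matrix n n 𝕜 → 𝕜) =
      fun M => ∑ σ : Equiv.Perm n, ((Equiv.Perm.sign σ : ℤ) : 𝕜) * ∏ i, M (σ i) i := by
    ext M
    simp [det_apply, Units.smul_def]
  rw [hdet]
  fun_prop

theorem hasDerivAt_det_one_add_smul (X : Matrix n n 𝕜) :
    HasDerivAt (fun t : 𝕜 => det (1 + t • X)) X.trace 0 := by
  have h := (det (1 + (Polynomial.X : Polynomial 𝕜) • X.map Polynomial.C)).hasDerivAt 0
  rw [derivative_det_one_add_X_smul] at h
  convert h using 1
  funext t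
  rw [← Polynomial.coe_evalRingHom, RingHom.map_det]
  congr 1
  ext i j
  by_cases hij : i = j <;> simp [hij, mul_comm t]

theorem hasDerivAt_det_add_smul {M : Matrix n n 𝕜} (hM : IsUnit M.det) (X : Matrix n n 𝕜) :
    HasDerivAt (fun t : 𝕜 => det (M + t • X)) (M.det * (M⁻¹ * X).trace) 0 := by
  have hfactor : (fun t : 𝕜 => det (M + t • X)) = fun t => M.det * det (1 + t • (M⁻¹ * X)) := by
    funext t
    rw [← det_mul, mul_add, mul_one, mul_smul_comm, mul_nonsing_inv_cancel_left _ _ hM]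
  rw [hfactor]
  exact (hasDerivAt_det_one_add_smul _).const_mul _

theorem fderiv_det_apply {M : Matrix n n 𝕜} (hM : IsUnit M.det) (X : Matrix n n 𝕜) :
    fderiv 𝕜 det M X = M.det * (M⁻¹ * X).trace := by
  have hline : HasDerivAt (fun t : 𝕜 => M + t • X) X 0 := by
    have h := ((hasDerivAt_id (0 : 𝕜)).smul_const X).const_add M
    rw [one_smul] at h
    exact h
  have h := (differentiable_det M).hasFDerivAt.comp_hasDerivAt_of_eq 0 hline (by simp)
  exact h.unique (hasDerivAt_det_add_smul hM X)

/-- `HasFDerivAt` only sees the topology, so the derivative of `Ring.inverse` in the normed ring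
structure given by the `L∞` operator norm transfers to the entrywise norm. -/
theorem hasFDerivAt_inv [CompleteSpace 𝕜] {M : Matrix n n 𝕜} (hM : IsUnit M.det) :
    HasFDerivAt (fun N : Matrix n n 𝕜 => N⁻¹) (-mulLeftRightCLM M⁻¹ M⁻¹) M := by
  let _ : NormedRing (Matrix n n 𝕜) := Matrix.linftyOpNormedRing
  let _ : NormedAlgebra 𝕜 (Matrix n n 𝕜) := Matrix.linftyOpNormedAlgebra
  have _ : HasSummableGeomSeries (Matrix n n 𝕜) :=
    @instHasSummableGeomSeriesOfCompleteSpace _ _ (inferInstanceAs (CompleteSpace (n → n → 𝕜)))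
  obtain ⟨u, rfl⟩ := (isUnit_iff_isUnit_det M).2 hM
  refine ((hasFDerivAt_ringInverse (𝕜 := 𝕜) u).congr_fderiv ?_).congr_of_eventuallyEq
    (.of_forall fun N => nonsing_inv_eq_ringInverse N)
  ext X : 1
  simp
  rfl

end Matrix

theorem HasFDerivAt.finsetProd_cpow_const {𝕜 : Type*} [NontriviallyNormedField 𝕜]
    [NormedAlgebra 𝕜 ℂ] {E : Type*} [NormedAddCommGroup E] [NormedSpace 𝕜 E] {ι : Type*}
    [DecidableEq ι] {s : Finset ι} {f : ι → E → ℂ} {f' : ι → E →L[𝕜] ℂ} {c : ι → ℂ} {x : E}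
    (hf : ∀ i ∈ s, HasFDerivAt (f i) (f' i) x) (hx : ∀ i ∈ s, f i x ∈ Complex.slitPlane) :
    HasFDerivAt (fun y => ∏ i ∈ s, f i y ^ c i)
      ((∏ i ∈ s, f i x ^ c i) • ∑ i ∈ s, (c i / f i x) • f' i) x := by
  have hpow : ∀ i ∈ s, HasFDerivAt (fun y => f i y ^ c i) ((c i * f i x ^ (c i - 1)) • f' i) x :=
    fun i hi =>
      (Complex.hasStrictDerivAt_cpow_const (hx i hi)).hasDerivAt.comp_hasFDerivAt x (hf i hi)
  refine (HasFDerivAt.finsetProd hpow).congr_fderiv ?_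
  rw [Finset.smul_sum]
  refine Finset.sum_congr rfl fun i hi => ?_
  rw [smul_smul, smul_smul]
  congr 1
  have hne := Complex.slitPlane_ne_zero (hx i hi)
  rw [← Finset.prod_erase_mul s _ hi, Complex.cpow_sub _ _ hne, Complex.cpow_one]
  field_simp

section RieszTypeII

open Complex

variable {m : ℕ}

def cmatCLM : Matrix (Fin m) (Fin m) ℝ →L[ℝ] Matrix (Fin m) (Fin m) ℂ :=
  LinearMap.toContinuousLinearMap ofRealCLM.toLinearMap.mapMatrix

@[simp]
theorem cmatCLM_apply (H : Matrix (Fin m) (Fin m) ℝ) : cmatCLM H = cmat H := rfl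

def traceForm : Matrix (Fin m) (Fin m) ℂ →L[ℝ] Matrix (Fin m) (Fin m) ℝ →L[ℝ] ℂ :=
  LinearMap.toContinuousBilinearMap <|
    LinearMap.mk₂ ℝ (fun B H => (B * cmat H).trace)
      (fun B₁ B₂ H => by rw [Matrix.add_mul, Matrix.trace_add])
      (fun r B H => by rw [Matrix.smul_mul, Matrix.trace_smul])
      (fun B H₁ H₂ => by rw [← cmatCLM_apply, map_add, Matrix.mul_add, Matrix.trace_add]; rfl)
      (fun r B H => by rw [← cmatCLM_apply, map_smul, Matrix.mul_smul, Matrix.trace_smul]; rfl)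

def cmatSandwich {k l : ℕ} (P : Matrix (Fin k) (Fin m) ℂ) (Q : Matrix (Fin m) (Fin l) ℂ) :
    Matrix (Fin m) (Fin m) ℝ →L[ℝ] Matrix (Fin k) (Fin l) ℂ :=
  ((Matrix.mulLeftRightCLM P Q).restrictScalars ℝ).comp cmatCLM

@[simp]
theorem cmatSandwich_apply {k l : ℕ} (P : Matrix (Fin k) (Fin m) ℂ) (Q : Matrix (Fin m) (Fin l) ℂ)
    (H : Matrix (Fin m) (Fin m) ℝ) : cmatSandwich P Q H = P * cmat H * Q := rfl

variable (S : Matrix (Fin m) (Fin m) ℝ)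

theorem hasFDerivAt_lpsub_Rmat (k : ℕ) (T : Matrix (Fin m) (Fin m) ℝ) :
    HasFDerivAt (fun T => lpsub (Rmat S T) k)
      (-(I • cmatSandwich ((Emat ℂ m k)ᵀ * cmat S) (cmat S * Emat ℂ m k))) T := by
  refine HasFDerivAt.congr_of_eventuallyEq
    ((ContinuousLinearMap.hasFDerivAt _).const_add (lpsub (1 : Matrix (Fin m) (Fin m) ℂ) k)) ?_
  refine .of_forall fun T => ?_
  change _ = _ + -(I • (((Emat ℂ m k)ᵀ * cmat S) * cmat T * (cmat S * Emat ℂ m k)))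
  simp only [lpsub, Rmat, sub_eq_add_neg]
  rw [Matrix.mul_add, Matrix.add_mul, Matrix.mul_neg, Matrix.neg_mul, Matrix.mul_smul,
    Matrix.smul_mul]
  simp [Matrix.mul_assoc]

theorem hasFDerivAt_det_lpsub_Rmat (i : Fin m) {T : Matrix (Fin m) (Fin m) ℝ}
    (hT : IsUnit (lpsub (Rmat S T) (i + 1)).det) :
    HasFDerivAt (fun T => (lpsub (Rmat S T) (i + 1)).det)
      ((-(I * (lpsub (Rmat S T) (i + 1)).det)) • traceForm (Amat S T i)) T := by
  have h := ((Matrix.differentiable_det (𝕜 := ℂ) _).hasFDerivAt.restrictScalars ℝ).comp T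
    (hasFDerivAt_lpsub_Rmat S (i + 1) T)
  refine h.congr_fderiv (ContinuousLinearMap.ext fun H => ?_)
  set N := lpsub (Rmat S T) (i + 1)
  set E := Emat ℂ m (i + 1)
  -- The calculus lemmas reach matrices through `Matrix.normedAddCommGroup`, the maps stated here
  -- through the default instances; the two agree only up to defeq, so evaluate with `change`.
  change fderiv ℂ det N (-(I • ((Eᵀ * cmat S) * cmat H * (cmat S * E)))) =
    -(I * N.det) * ((cmat S * E * N⁻¹ * Eᵀ * cmat S) * cmat H).trace
  have hcyc : (N⁻¹ * (Eᵀ * cmat S * cmat H * (cmat S * E))).trace =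
      (cmat S * E * N⁻¹ * Eᵀ * cmat S * cmat H).trace := by
    rw [← Matrix.mul_assoc, Matrix.trace_mul_comm]
    simp only [Matrix.mul_assoc]
  rw [map_neg, map_smul, Matrix.fderiv_det_apply hT, hcyc, smul_eq_mul]
  ring

theorem hasFDerivAt_Amat (i : Fin m) {T : Matrix (Fin m) (Fin m) ℝ}
    (hT : IsUnit (lpsub (Rmat S T) (i + 1)).det) :
    HasFDerivAt (fun T => Amat S T i)
      (I • cmatSandwich (Amat S T i) (Amat S T i)) T := by
  set E := Emat ℂ m (i + 1)
  have h := ((Matrix.mulLeftRightCLM (cmat S * E) (Eᵀ * cmat S)).restrictScalars ℝ).hasFDerivAt.comp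
    T (((Matrix.hasFDerivAt_inv hT).restrictScalars ℝ).comp T (hasFDerivAt_lpsub_Rmat S (i + 1) T))
  refine (h.congr_fderiv (ContinuousLinearMap.ext fun H => ?_)).congr_of_eventuallyEq
    (.of_forall fun T => ?_)
  · set N := lpsub (Rmat S T) (i + 1)
    change cmat S * E * -(N⁻¹ * -(I • ((Eᵀ * cmat S) * cmat H * (cmat S * E))) * N⁻¹) *
        (Eᵀ * cmat S) =
      I • ((cmat S * E * N⁻¹ * Eᵀ * cmat S) * cmat H * (cmat S * E * N⁻¹ * Eᵀ * cmat S))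
    simp only [Matrix.mul_neg, Matrix.neg_mul, neg_neg, Matrix.mul_smul, Matrix.smul_mul,
      Matrix.mul_assoc]
  · simp [Amat, E, Matrix.mul_assoc]

def psiExponent (t : Fin m → ℝ) (i : Fin m) : ℂ := ((t i - nthR t ((i : ℕ) + 1) : ℝ) : ℂ)

def logGrad (t : Fin m → ℝ) (T : Matrix (Fin m) (Fin m) ℝ) : Matrix (Fin m) (Fin m) ℂ :=
  -(I • ∑ i, psiExponent t i • Amat S T i)

variable (t : Fin m → ℝ)

theorem trace_logGrad_mul (T : Matrix (Fin m) (Fin m) ℝ) (X : Matrix (Fin m) (Fin m) ℂ) :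
    (logGrad S t T * X).trace = -(I * ∑ i, psiExponent t i * (Amat S T i * X).trace) := by
  simp only [logGrad, Matrix.neg_mul, Matrix.smul_mul, Matrix.sum_mul, Matrix.trace_neg,
    Matrix.trace_smul, Matrix.trace_sum, smul_eq_mul]

theorem hasFDerivAt_psiII {T : Matrix (Fin m) (Fin m) ℝ}
    (hT : ∀ i : Fin m, (lpsub (Rmat S T) (i + 1)).det ∈ slitPlane) :
    HasFDerivAt (psiII S t) (traceForm (psiII S t T • logGrad S t T)) T := by
  have hne (i : Fin m) : (lpsub (Rmat S T) (i + 1)).det ≠ 0 := slitPlane_ne_zero (hT i)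
  have h := HasFDerivAt.finsetProd_cpow_const (s := Finset.univ) (c := psiExponent t)
    (fun i _ => hasFDerivAt_det_lpsub_Rmat S i (hne i).isUnit) (fun i _ => hT i)
  refine h.congr_fderiv (ContinuousLinearMap.ext fun H => ?_)
  rw [_root_.smul_apply, _root_.sum_apply]
  change psiII S t T * ∑ i, psiExponent t i / (lpsub (Rmat S T) (i + 1)).det *
      (-(I * (lpsub (Rmat S T) (i + 1)).det) * (Amat S T i * cmat H).trace) =
    (psiII S t T • logGrad S t T * cmat H).trace
  rw [Matrix.smul_mul, Matrix.trace_smul, trace_logGrad_mul, smul_eq_mul, Finset.mul_sum,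
    Finset.mul_sum, ← Finset.sum_neg_distrib, Finset.mul_sum]
  refine Finset.sum_congr rfl fun i _ => ?_
  field_simp [hne i]

def logGradFDeriv (T : Matrix (Fin m) (Fin m) ℝ) :
    Matrix (Fin m) (Fin m) ℝ →L[ℝ] Matrix (Fin m) (Fin m) ℂ :=
  ∑ i, psiExponent t i • cmatSandwich (Amat S T i) (Amat S T i)

theorem logGradFDeriv_apply (T H : Matrix (Fin m) (Fin m) ℝ) :
    logGradFDeriv S t T H = ∑ i, psiExponent t i • (Amat S T i * cmat H * Amat S T i) := by
  simp [logGradFDeriv]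

theorem hasFDerivAt_logGrad {T : Matrix (Fin m) (Fin m) ℝ}
    (hT : ∀ i : Fin m, IsUnit (lpsub (Rmat S T) (i + 1)).det) :
    HasFDerivAt (logGrad S t) (logGradFDeriv S t T) T := by
  have h := ((HasFDerivAt.fun_sum (u := Finset.univ) fun i _ =>
    (hasFDerivAt_Amat S i (hT i)).const_smul (psiExponent t i)).const_smul I).neg
  refine h.congr_fderiv (ContinuousLinearMap.ext fun H =>
    Eq.trans ?_ (logGradFDeriv_apply S t T H).symm)
  rw [_root_.neg_apply, _root_.smul_apply, _root_.sum_apply]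
  change -(I • ∑ i, psiExponent t i • I • (Amat S T i * cmat H * Amat S T i)) = _
  simp only [Finset.smul_sum, smul_smul, ← Finset.sum_neg_distrib, ← neg_smul]
  refine Finset.sum_congr rfl fun i _ => ?_
  rw [show -(I * (psiExponent t i * I)) = psiExponent t i by ring_nf; simp]

theorem eventually_det_lpsub_Rmat_mem_slitPlane {T : Matrix (Fin m) (Fin m) ℝ}
    (hT : ∀ i : Fin m, (lpsub (Rmat S T) (i + 1)).det ∈ slitPlane) :
    ∀ᶠ T' in nhds T, ∀ i : Fin m, (lpsub (Rmat S T') (i + 1)).det ∈ slitPlane := by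
  refine Filter.eventually_all.2 fun i => ?_
  have hcont := (hasFDerivAt_det_lpsub_Rmat S i (slitPlane_ne_zero (hT i)).isUnit).continuousAt
  exact hcont.eventually_mem (isOpen_slitPlane.mem_nhds (hT i))

end RieszTypeII

theorem riesz_typeII_charfun_second_deriv_general {m : ℕ}
    (Shalf : Matrix (Fin m) (Fin m) ℝ)
    (t : Fin m → ℝ)
    (T : Matrix (Fin m) (Fin m) ℝ)
    (hT : ∀ i : Fin m, (lpsub (Rmat Shalf T) ((i : ℕ) + 1)).det ∈ Complex.slitPlane) :
    DifferentiableAt ℝ (psiII Shalf t) T ∧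
    ∃ L₂ : Matrix (Fin m) (Fin m) ℝ →L[ℝ] (Matrix (Fin m) (Fin m) ℝ →L[ℝ] ℂ),
      HasFDerivAt (fderiv ℝ (psiII Shalf t)) L₂ T ∧
        ∀ H K : Matrix (Fin m) (Fin m) ℝ,
          L₂ H K = Complex.I ^ 2
              * ((∑ i : Fin m, ((t i - nthR t ((i : ℕ) + 1) : ℝ) : ℂ)
                    * (Amat Shalf T i * cmat H).trace)
                  * (∑ j : Fin m, ((t j - nthR t ((j : ℕ) + 1) : ℝ) : ℂ)
                      * (Amat Shalf T j * cmat K).trace)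
                - ∑ i : Fin m, ((t i - nthR t ((i : ℕ) + 1) : ℝ) : ℂ)
                    * (Amat Shalf T i * cmat H * Amat Shalf T i * cmat K).trace)
              * psiII Shalf t T := by
  have hψ := hasFDerivAt_psiII Shalf t hT
  have hG := hψ.smul
    (hasFDerivAt_logGrad Shalf t fun i => (Complex.slitPlane_ne_zero (hT i)).isUnit)
  -- Instance search misses the normed structure of this space of linear maps: its topology agrees
  -- with the one coming from `Matrix.normedAddCommGroup` only up to defeq.
  let _ : NormedAddCommGroup (Matrix (Fin m) (Fin m) ℝ →L[ℝ] ℂ) :=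
    ContinuousLinearMap.toNormedAddCommGroup
  let _ : NormedSpace ℝ (Matrix (Fin m) (Fin m) ℝ →L[ℝ] ℂ) := ContinuousLinearMap.toNormedSpace
  have hD := (traceForm (m := m)).hasFDerivAt.comp T hG
  refine ⟨hψ.differentiableAt, _, hD.congr_of_eventuallyEq ?_, fun H K => ?_⟩
  · filter_upwards [eventually_det_lpsub_Rmat_mem_slitPlane Shalf hT] with T' hT'
    exact (hasFDerivAt_psiII Shalf t hT').fderiv
  · change ((psiII Shalf t T • logGradFDeriv Shalf t T H +
      (psiII Shalf t T • logGrad Shalf t T * cmat H).trace • logGrad Shalf t T) * cmat K).trace = _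
    rw [logGradFDeriv_apply, Matrix.add_mul, Matrix.trace_add, Matrix.smul_mul, Matrix.smul_mul,
      Matrix.smul_mul, Matrix.trace_smul, Matrix.trace_smul, Matrix.trace_smul, trace_logGrad_mul,
      trace_logGrad_mul, Matrix.sum_mul, Matrix.trace_sum]
    simp only [Matrix.smul_mul, Matrix.trace_smul, smul_eq_mul, psiExponent]
    linear_combination (psiII Shalf t T * ∑ i : Fin m, ((t i - nthR t ((i : ℕ) + 1) : ℝ) : ℂ)
      * (Amat Shalf T i * cmat H * Amat Shalf T i * cmat K).trace) * Complex.I_sq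

/-- Second Fréchet derivative of the characteristic function of the Riesz type II
distribution: `D²ψ(T)(H,K) = i² [(∑_i c_i tr(A_i H))(∑_j c_j tr(A_j K))
  - ∑_i c_i tr(A_i H A_i K)] ψ(T)`, where `c_i = t_i - t_{i+1}`. -/
theorem riesz_typeII_charfun_second_deriv {m : ℕ} (hm : 1 ≤ m)
    (Sig Shalf : Matrix (Fin m) (Fin m) ℝ)
    (hSig : Sig.PosDef) (hShalf : Shalf.PosDef) (hShalf_symm : Shalf.IsSymm)
    (hsq : Shalf * Shalf = Sig)
    (t : Fin m → ℝ)
    (T : Matrix (Fin m) (Fin m) ℝ)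
    (hT : ∀ i : Fin m, (lpsub (Rmat Shalf T) ((i : ℕ) + 1)).det ∈ Complex.slitPlane) :
    DifferentiableAt ℝ (psiII Shalf t) T ∧
    ∃ L₂ : Matrix (Fin m) (Fin m) ℝ →L[ℝ] (Matrix (Fin m) (Fin m) ℝ →L[ℝ] ℂ),
      HasFDerivAt (fderiv ℝ (psiII Shalf t)) L₂ T ∧
        ∀ H K : Matrix (Fin m) (Fin m) ℝ,
          L₂ H K = Complex.I ^ 2
              * ((∑ i : Fin m, ((t i - nthR t ((i : ℕ) + 1) : ℝ) : ℂ)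
                    * (Amat Shalf T i * cmat H).trace)
                  * (∑ j : Fin m, ((t j - nthR t ((j : ℕ) + 1) : ℝ) : ℂ)
                      * (Amat Shalf T j * cmat K).trace)
                - ∑ i : Fin m, ((t i - nthR t ((i : ℕ) + 1) : ℝ) : ℂ)
                    * (Amat Shalf T i * cmat H * Amat Shalf T i * cmat K).trace)
              * psiII Shalf t T :=
  riesz_typeII_charfun_second_deriv_general Shalf t T hT
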